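/- Soundness of the basic DPLL transition system: if ([], F₀) →d* (M, F) where →d is the union of the decide, unitPropagate, and backtrack rules, then (1) if DecVars ⊇ vars F₀ and (M, F) is an accepting state, then F₀ is satisfiable and M is a model of F₀; (2) if (M, F) is a rejecting state, then F₀ is unsatisfiable. -/

import Mathlib

namespace SatFormal

/-- Propositional literals: positive or negative variables (variables are naturals). -/
inductive Literal where
  | Pos : Nat → Literal
  | Neg : Nat → Literal
deriving DecidableEq, Repr

/-- The variable of a literal. -/
def Literal.var : Literal → Nat
  | .Pos n => n
  | .Neg n => n

/-- The opposite literal. -/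
def Literal.opp : Literal → Literal
  | .Pos n => .Neg n
  | .Neg n => .Pos n

abbrev Clause := List Literal
abbrev Formula := List Clause
/-- A trail is a list of annotated literals: (literal, decision flag). -/
abbrev Trail := List (Literal × Bool)

/-- Underlying literals of a trail. -/
def elements (M : Trail) : List Literal := M.map Prod.fst
/-- Decision literals of a trail. -/
def decisions (M : Trail) : List Literal := (M.filter (fun a => a.2)).map Prod.fst
/-- Number of decision literals. -/
def currentLevel (M : Trail) : Nat := (M.filter (fun a => a.2)).length

/-- Prefix of the trail up to and including the first occurrence of literal `l`. -/
def prefixTo (l : Literal) (M : Trail) : Trail :=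
  M.takeWhile (fun a => decide (a.1 ≠ l)) ++ (M.dropWhile (fun a => decide (a.1 ≠ l))).take 1

/-- Decision literals preceding the first occurrence of `l` (including `l` if it is one). -/
def decisionsTo (l : Literal) (M : Trail) : List Literal := decisions (prefixTo l M)

/-- Decision level of a literal in a trail. -/
def levelOf (l : Literal) (M : Trail) : Nat := (decisionsTo l M).length

/-- Longest prefix of the trail containing only elements of level ≤ `lv`. -/
def prefixToLevel (lv : Nat) : Trail → Trail
  | [] => []
  | a :: M =>
      if a.2 then (if 0 < lv then a :: prefixToLevel (lv - 1) M else [])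
      else a :: prefixToLevel lv M

/-- The last decision literal of a trail (default `Pos 0` when there is none). -/
def lastDecision (M : Trail) : Literal := (decisions M).getLastD (Literal.Pos 0)

/-- The prefix of the trail before its last decision literal. -/
def prefixBeforeLastDecision (M : Trail) : Trail :=
  ((M.reverse.dropWhile (fun a => !a.2)).tail).reverse

/-- A clause is true in a valuation. -/
def clauseTrue (v : List Literal) (c : Clause) : Prop := ∃ l ∈ c, l ∈ v
/-- A formula is true in a valuation. -/
def formulaTrue (v : List Literal) (F : Formula) : Prop := ∀ c ∈ F, clauseTrue v c
/-- A clause is false in a valuation. -/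
def clauseFalse (v : List Literal) (c : Clause) : Prop := ∀ l ∈ c, l.opp ∈ v
/-- A formula is false in a valuation. -/
def formulaFalse (v : List Literal) (F : Formula) : Prop := ∃ c ∈ F, clauseFalse v c
/-- Consistency of a valuation. -/
def consistent (v : List Literal) : Prop := ¬ ∃ l, l ∈ v ∧ Literal.opp l ∈ v
/-- A model of a formula. -/
def isModel (v : List Literal) (F : Formula) : Prop := consistent v ∧ formulaTrue v F
/-- Satisfiability. -/
def sat (F : Formula) : Prop := ∃ v, isModel v F
/-- A formula entails a clause. -/
def entailsClause (F : Formula) (c : Clause) : Prop := ∀ v, isModel v F → clauseTrue v c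
/-- A formula entails a literal. -/
def entailsLit (F : Formula) (l : Literal) : Prop := ∀ v, isModel v F → l ∈ v
/-- Logical equivalence of formulae. -/
def equivFormula (F1 F2 : Formula) : Prop := ∀ v, isModel v F1 ↔ isModel v F2

/-- Variables of a formula. -/
def varsF (F : Formula) : Set Nat := {n | ∃ c ∈ F, ∃ l ∈ c, Literal.var l = n}
/-- Variables of a valuation. -/
def varsV (v : List Literal) : Set Nat := {n | ∃ l ∈ v, Literal.var l = n}
/-- Variables of a trail. -/
def varsT (M : Trail) : Set Nat := varsV (elements M)

/-- The formula of unit clauses corresponding to a list of literals. -/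
def valToForm (v : List Literal) : Formula := v.map (fun l => [l])

/-- A clause is unit in a valuation with unit literal `l`. -/
def isUnit (c : Clause) (l : Literal) (v : List Literal) : Prop :=
  l ∈ c ∧ l ∉ v ∧ l.opp ∉ v ∧ ∀ l' ∈ c, l' ≠ l → Literal.opp l' ∈ v

/-- `a` precedes `b` in the list `v` (first positions compared). -/
def precedes (a b : Literal) (v : List Literal) : Prop :=
  a ∈ v ∧ b ∈ v ∧ v.idxOf a < v.idxOf b

/-- A clause `c` is a reason for propagation of `l` in valuation `v`. -/
def isReason (c : Clause) (l : Literal) (v : List Literal) : Prop :=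
  l ∈ c ∧ l ∈ v ∧ ∀ l' ∈ c, l' ≠ l → Literal.opp l' ∈ v ∧ precedes (Literal.opp l') l v

/-- `l` is the literal of `c` asserted last in `v`. -/
def isLastAsserted (l : Literal) (c : List Literal) (v : List Literal) : Prop :=
  l ∈ c ∧ l ∈ v ∧ ∀ l' ∈ c, l' ∈ v → l' = l ∨ precedes l' l v

/-- The list of opposites of the literals of a clause. -/
def oppC (c : Clause) : List Literal := c.map Literal.opp

/-- `lv` is a backjump level for literal `l` and clause `c` w.r.t. trail `M`. -/
def isBackjumpLevel (lv : Nat) (l : Literal) (c : Clause) (M : Trail) : Prop :=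
  clauseFalse (elements M) c ∧ isLastAsserted l.opp (oppC c) (elements M) ∧
  lv < levelOf l.opp M ∧ ∀ l' ∈ c, l' ≠ l → levelOf (Literal.opp l') M ≤ lv

/-- Minimal backjump level. -/
def isMinimalBackjumpLevel (lv : Nat) (l : Literal) (c : Clause) (M : Trail) : Prop :=
  isBackjumpLevel lv l c M ∧ ∀ lv' < lv, ¬ isBackjumpLevel lv' l c M

/-- Unique implication point condition. -/
def isUIP (l : Literal) (c : Clause) (M : Trail) : Prop :=
  clauseFalse (elements M) c ∧ isLastAsserted l.opp (oppC c) (elements M) ∧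
  ∀ l' ∈ c, l' ≠ l → levelOf (Literal.opp l') M < levelOf l.opp M

/-- Resolution of clauses `C` and `c` over the literal `l`. -/
def resolve (C c : Clause) (l : Literal) : Clause :=
  C.filter (fun x => decide (x ≠ l)) ++ c.filter (fun x => decide (x ≠ l.opp))

/-- Lexicographic extension of a relation to lists. -/
def lexExt {X : Type _} (r : X → X → Prop) (s t : List X) : Prop :=
  (∃ rr, s = t ++ rr ∧ rr ≠ []) ∨
  (∃ rr s' t' a b, s = rr ++ a :: s' ∧ t = rr ++ b :: t' ∧ r a b)

/-- Ordering on annotated literals: decisions are greater than non-decisions. -/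
def litSucc (a b : Literal × Bool) : Prop := a.2 = true ∧ b.2 = false

/-- Trail ordering: lexicographic extension of `litSucc`. -/
def trailSucc : Trail → Trail → Prop := lexExt litSucc

/-- One step of the multiset extension of a relation. -/
def multExtStep {α : Type _} (r : α → α → Prop) (S1 S2 : Multiset α) : Prop :=
  ∃ (S S2' : Multiset α) (s1 : α), S1 = S + {s1} ∧ S2 = S + S2' ∧ ∀ s2 ∈ S2', r s1 s2

/-- Multiset extension: transitive closure of `multExtStep`. -/
def multExt {α : Type _} (r : α → α → Prop) : Multiset α → Multiset α → Prop :=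
  Relation.TransGen (multExtStep r)

/-- Clause ordering induced by a trail `M` (as a list of literals). -/
def clauseSucc (M : List Literal) (C1 C2 : Clause) : Prop :=
  multExt (fun a b => precedes a b M)
    ((oppC C2).dedup : Multiset Literal) ((oppC C1).dedup : Multiset Literal)

/-! ## Basic DPLL system -/

abbrev DState := Trail × Formula

def decideR (DecVars : Set Nat) (s1 s2 : DState) : Prop :=
  ∃ l : Literal, l.var ∈ DecVars ∧ l ∉ elements s1.1 ∧ l.opp ∉ elements s1.1 ∧
    s2.1 = s1.1 ++ [(l, true)] ∧ s2.2 = s1.2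

def unitPropagateR (s1 s2 : DState) : Prop :=
  ∃ c l, c ∈ s1.2 ∧ isUnit c l (elements s1.1) ∧
    s2.1 = s1.1 ++ [(l, false)] ∧ s2.2 = s1.2

def backtrackR (s1 s2 : DState) : Prop :=
  formulaFalse (elements s1.1) s1.2 ∧ decisions s1.1 ≠ [] ∧
  s2.1 = prefixBeforeLastDecision s1.1 ++ [((lastDecision s1.1).opp, false)] ∧ s2.2 = s1.2

def stepD (DecVars : Set Nat) (s1 s2 : DState) : Prop :=
  unitPropagateR s1 s2 ∨ backtrackR s1 s2 ∨ decideR DecVars s1 s2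

def accepting (DecVars : Set Nat) (s : DState) : Prop :=
  ¬ formulaFalse (elements s.1) s.2 ∧
  ¬ ∃ l : Literal, l.var ∈ DecVars ∧ l ∉ elements s.1 ∧ l.opp ∉ elements s.1

def rejecting (s : DState) : Prop :=
  formulaFalse (elements s.1) s.2 ∧ decisions s.1 = []

/-! ## Conflict analysis system -/

abbrev CState := Trail × Formula × Clause × Bool

def c_decide (DecVars : Set Nat) : CState → CState → Prop :=
  fun (M1, F1, C1, b1) (M2, F2, C2, b2) =>
    (∃ l : Literal, l.var ∈ DecVars ∧ l ∉ elements M1 ∧ l.opp ∉ elements M1 ∧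
      M2 = M1 ++ [(l, true)]) ∧ F2 = F1 ∧ C2 = C1 ∧ b2 = b1

def c_unitPropagate (Vars : Set Nat) : CState → CState → Prop :=
  fun (M1, F1, C1, b1) (M2, F2, C2, b2) =>
    (∃ (c : Clause) (l : Literal), entailsClause F1 c ∧ l.var ∈ Vars ∧
      isUnit c l (elements M1) ∧ M2 = M1 ++ [(l, false)]) ∧
    F2 = F1 ∧ C2 = C1 ∧ b2 = b1

def c_conflict : CState → CState → Prop :=
  fun (M1, F1, C1, b1) (M2, F2, C2, b2) =>
    b1 = false ∧ (∃ c : Clause, entailsClause F1 c ∧ clauseFalse (elements M1) c ∧ C2 = c) ∧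
    M2 = M1 ∧ F2 = F1 ∧ b2 = true ∧ C1 = C1

def c_explain : CState → CState → Prop :=
  fun (M1, F1, C1, b1) (M2, F2, C2, b2) =>
    b1 = true ∧ (∃ (l : Literal) (c : Clause), l ∈ C1 ∧ isReason c l.opp (elements M1) ∧
      entailsClause F1 c ∧ C2 = resolve C1 c l) ∧
    M2 = M1 ∧ F2 = F1 ∧ b2 = true

def c_backjump : CState → CState → Prop :=
  fun (M1, F1, C1, b1) (M2, F2, C2, b2) =>
    b1 = true ∧ (∃ (l : Literal) (lv : Nat), isBackjumpLevel lv l C1 M1 ∧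
      M2 = prefixToLevel lv M1 ++ [(l, false)]) ∧
    F2 = F1 ∧ C2 = [] ∧ b2 = false

def c_learn : CState → CState → Prop :=
  fun (M1, F1, C1, b1) (M2, F2, C2, b2) =>
    b1 = true ∧ C1 ∉ F1 ∧ M2 = M1 ∧ F2 = F1 ++ [C1] ∧ C2 = C1 ∧ b2 = b1

def stepC (F0 : Formula) (DecVars : Set Nat) (s1 s2 : CState) : Prop :=
  c_decide DecVars s1 s2 ∨ c_unitPropagate (varsF F0 ∪ DecVars) s1 s2 ∨
  c_conflict s1 s2 ∨ c_explain s1 s2 ∨ c_backjump s1 s2 ∨ c_learn s1 s2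

/-! ## System with restarts and forgetting -/

abbrev RState := Trail × Formula × Clause × Bool × Bool

def r_decide (F0 : Formula) (DecVars : Set Nat) : RState → RState → Prop :=
  fun (M1, Fl1, C1, cf1, ln1) (M2, Fl2, C2, cf2, ln2) =>
    (∃ l : Literal, l.var ∈ DecVars ∧ l ∉ elements M1 ∧ l.opp ∉ elements M1 ∧
      M2 = M1 ++ [(l, true)]) ∧
    (¬ ∃ (c : Clause) (l : Literal), c ∈ F0 ++ Fl1 ∧ isUnit c l (elements M1)) ∧
    Fl2 = Fl1 ∧ C2 = C1 ∧ cf2 = cf1 ∧ ln2 = ln1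

def r_unitPropagate (F0 : Formula) : RState → RState → Prop :=
  fun (M1, Fl1, C1, cf1, ln1) (M2, Fl2, C2, cf2, ln2) =>
    (∃ (c : Clause) (l : Literal), c ∈ F0 ++ Fl1 ∧ isUnit c l (elements M1) ∧
      M2 = M1 ++ [(l, false)]) ∧
    Fl2 = Fl1 ∧ C2 = C1 ∧ cf2 = cf1 ∧ ln2 = ln1

def r_conflict (F0 : Formula) : RState → RState → Prop :=
  fun (M1, Fl1, C1, cf1, ln1) (M2, Fl2, C2, cf2, ln2) =>
    cf1 = false ∧ (∃ c : Clause, c ∈ F0 ++ Fl1 ∧ clauseFalse (elements M1) c ∧ C2 = c) ∧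
    M2 = M1 ∧ Fl2 = Fl1 ∧ cf2 = true ∧ ln2 = ln1 ∧ C1 = C1

def r_explain (F0 : Formula) : RState → RState → Prop :=
  fun (M1, Fl1, C1, cf1, ln1) (M2, Fl2, C2, cf2, ln2) =>
    cf1 = true ∧ (∃ (l : Literal) (c : Clause), l ∈ C1 ∧ isReason c l.opp (elements M1) ∧
      c ∈ F0 ++ Fl1 ∧ C2 = resolve C1 c l) ∧
    M2 = M1 ∧ Fl2 = Fl1 ∧ cf2 = true ∧ ln2 = ln1

def r_backjumpLearn : RState → RState → Prop :=
  fun (M1, Fl1, C1, cf1, _ln1) (M2, Fl2, C2, cf2, ln2) =>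
    cf1 = true ∧ (∃ (l : Literal) (lv : Nat), isMinimalBackjumpLevel lv l C1 M1 ∧
      M2 = prefixToLevel lv M1 ++ [(l, false)]) ∧
    Fl2 = Fl1 ++ [C1] ∧ C2 = [] ∧ cf2 = false ∧ ln2 = true

def r_forget : RState → RState → Prop :=
  fun (M1, Fl1, C1, cf1, ln1) (M2, Fl2, C2, cf2, ln2) =>
    cf1 = false ∧ ln1 = true ∧
    (∃ Fc : Formula, (∀ c ∈ Fc, c ∈ Fl1) ∧
      (∀ c ∈ Fc, ¬ ∃ l : Literal, isReason c l (elements M1)) ∧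
      Fl2 = Fl1.filter (fun c => decide (c ∉ Fc))) ∧
    M2 = M1 ∧ C2 = C1 ∧ cf2 = cf1 ∧ ln2 = false

def r_restart : RState → RState → Prop :=
  fun (M1, Fl1, C1, cf1, ln1) (M2, Fl2, C2, cf2, ln2) =>
    cf1 = false ∧ ln1 = true ∧
    M2 = prefixToLevel 0 M1 ∧ Fl2 = Fl1 ∧ C2 = C1 ∧ cf2 = cf1 ∧ ln2 = false

/-- The system without `forget` (with `restart`). -/
def stepF (F0 : Formula) (DecVars : Set Nat) (s1 s2 : RState) : Prop :=
  r_decide F0 DecVars s1 s2 ∨ r_unitPropagate F0 s1 s2 ∨ r_conflict F0 s1 s2 ∨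
  r_explain F0 s1 s2 ∨ r_backjumpLearn s1 s2 ∨ r_restart s1 s2

/-- The full system with both `restart` and `forget`. -/
def stepAll (F0 : Formula) (DecVars : Set Nat) (s1 s2 : RState) : Prop :=
  stepF F0 DecVars s1 s2 ∨ r_forget s1 s2

/-- Normalization of a formula: remove duplicate literals and duplicate clauses. -/
def normF (F : Formula) : Formula := (F.map List.dedup).dedup

/-!
Every reachable trail `M` satisfies an invariant: it is consistent, has no repeated literal, and
for each prefix `P` of `M`, a model of `F₀` that falsifies no decision literal of `P` falsifies no
literal of `P`. Propagated literals preserve this because their clause is in `F₀`; the literal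
`¬d` added by backtracking preserves it because a model containing the last decision `d` would
falsify no decision of the old trail, hence no literal of it, although the old trail falsifies a
clause of `F₀`. The same argument with no decisions at all shows that a rejecting state has no
model. In an accepting state every variable of `F₀` is assigned and no clause is false, so every
clause is true in the consistent trail.
-/

@[simp]
lemma Literal.opp_opp (l : Literal) : l.opp.opp = l := by cases l <;> rfl

@[simp]
lemma elements_append (A B : Trail) : elements (A ++ B) = elements A ++ elements B := by
  simp [elements]

@[simp]
lemma elements_singleton (a : Literal × Bool) : elements [a] = [a.1] := rfl

@[simp]
lemma decisions_append (A B : Trail) : decisions (A ++ B) = decisions A ++ decisions B := by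
  simp [decisions]

lemma prefixBeforeLastDecision_concat_decision (M : Trail) (l : Literal) :
    prefixBeforeLastDecision (M ++ [(l, true)]) = M := by
  simp [prefixBeforeLastDecision]

lemma prefixBeforeLastDecision_concat_propagated (M : Trail) (l : Literal) :
    prefixBeforeLastDecision (M ++ [(l, false)]) = prefixBeforeLastDecision M := by
  simp [prefixBeforeLastDecision]

lemma eq_prefixBeforeLastDecision_append (M : Trail) (hM : decisions M ≠ []) :
    ∃ R : Trail, M = prefixBeforeLastDecision M ++ (lastDecision M, true) :: R ∧
      decisions R = [] := by
  induction M using List.reverseRecOn with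
  | nil => simp [decisions] at hM
  | append_singleton M a ih =>
    obtain ⟨l, _ | _⟩ := a
    · have hdec : decisions (M ++ [(l, false)]) = decisions M := by simp [decisions]
      obtain ⟨R, hR, hRdec⟩ := ih (hdec ▸ hM)
      refine ⟨R ++ [(l, false)], ?_, by rw [decisions_append, hRdec]; rfl⟩
      rw [prefixBeforeLastDecision_concat_propagated, lastDecision, hdec, ← lastDecision]
      conv_lhs => rw [hR]
      simp
    · refine ⟨[], ?_, rfl⟩
      simp [prefixBeforeLastDecision_concat_decision, lastDecision, decisions]

def DecisionsEntail (F : Formula) (M : Trail) : Prop :=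
  ∀ v, isModel v F → (∀ d ∈ decisions M, d.opp ∉ v) → ∀ l ∈ elements M, l.opp ∉ v

lemma DecisionsEntail.exists_decision_opp_mem {F : Formula} {M : Trail} {v : List Literal}
    (hM : DecisionsEntail F M) (hff : formulaFalse (elements M) F) (hv : isModel v F) :
    ∃ d ∈ decisions M, d.opp ∈ v := by
  by_contra! hdec
  obtain ⟨c, hcF, hcM⟩ := hff
  obtain ⟨l, hlc, hlv⟩ := hv.2 c hcF
  simpa [hlv] using hM v hv hdec l.opp (hcM l hlc)

lemma DecisionsEntail.not_sat {F : Formula} {M : Trail} (hM : DecisionsEntail F M)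
    (hff : formulaFalse (elements M) F) (hdec : decisions M = []) : ¬ sat F := by
  rintro ⟨v, hv⟩
  obtain ⟨d, hd, -⟩ := hM.exists_decision_opp_mem hff hv
  simp [hdec] at hd

structure TrailInvariant (F : Formula) (M : Trail) : Prop where
  nodup_elements : (elements M).Nodup
  consistent_elements : consistent (elements M)
  decisionsEntail_of_prefix : ∀ P, P <+: M → DecisionsEntail F P

namespace TrailInvariant

variable {F : Formula} {M : Trail}

lemma nil (F : Formula) : TrailInvariant F [] where
  nodup_elements := by simp [elements]
  consistent_elements := by simp [consistent, elements]
  decisionsEntail_of_prefix P hP := by simp_all [DecisionsEntail, elements]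

lemma append {l : Literal} {b : Bool} (hM : TrailInvariant F M)
    (hl : l ∉ elements M) (hl' : l.opp ∉ elements M)
    (hent : ∀ v, isModel v F → (∀ d ∈ decisions (M ++ [(l, b)]), d.opp ∉ v) →
      (∀ m ∈ elements M, m.opp ∉ v) → l.opp ∉ v) :
    TrailInvariant F (M ++ [(l, b)]) where
  nodup_elements := by
    simpa [List.nodup_append] using ⟨hM.nodup_elements, fun a ha h => hl (h ▸ ha)⟩
  consistent_elements := by
    rintro ⟨x, hx, hx'⟩
    simp only [elements_append, elements_singleton, List.mem_append, List.mem_singleton] at hx hx'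
    rcases hx with hx | rfl <;> rcases hx' with hx' | hx'
    · exact hM.consistent_elements ⟨x, hx, hx'⟩
    · exact hl' (by rwa [← hx', Literal.opp_opp])
    · exact hl' hx'
    · cases x <;> simp [Literal.opp] at hx'
  decisionsEntail_of_prefix P hP := by
    rcases List.prefix_concat_iff.mp hP with rfl | hP
    · intro v hv hdec
      have hMv := hM.decisionsEntail_of_prefix M List.prefix_rfl v hv
        (fun d hd => hdec d (by simp [hd]))
      simpa [or_imp, forall_and] using ⟨hMv, hent v hv hdec hMv⟩
    · exact hM.decisionsEntail_of_prefix P hP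

lemma unitPropagate {c : Clause} {l : Literal} (hM : TrailInvariant F M) (hc : c ∈ F)
    (hunit : isUnit c l (elements M)) : TrailInvariant F (M ++ [(l, false)]) := by
  obtain ⟨hlc, hl, hl', hrest⟩ := hunit
  refine hM.append hl hl' fun v hv _ hMv hlv => ?_
  obtain ⟨l', hl'c, hl'v⟩ := hv.2 c hc
  by_cases h : l' = l
  · exact hv.1 ⟨l, h ▸ hl'v, hlv⟩
  · simpa [hl'v] using hMv _ (hrest l' hl'c h)

lemma decide {l : Literal} (hM : TrailInvariant F M) (hl : l ∉ elements M)
    (hl' : l.opp ∉ elements M) : TrailInvariant F (M ++ [(l, true)]) :=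
  hM.append hl hl' fun _ _ hdec _ => hdec l (by simp [decisions])

lemma of_prefix {P : Trail} (hM : TrailInvariant F M) (hPM : P <+: M) : TrailInvariant F P where
  nodup_elements := hM.nodup_elements.sublist (hPM.sublist.map Prod.fst)
  consistent_elements := fun ⟨l, hl, hl'⟩ => hM.consistent_elements
    ⟨l, (hPM.sublist.map Prod.fst).subset hl, (hPM.sublist.map Prod.fst).subset hl'⟩
  decisionsEntail_of_prefix Q hQP := hM.decisionsEntail_of_prefix Q (hQP.trans hPM)

lemma backtrack (hM : TrailInvariant F M) (hff : formulaFalse (elements M) F)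
    (hdec : decisions M ≠ []) :
    TrailInvariant F (prefixBeforeLastDecision M ++ [((lastDecision M).opp, false)]) := by
  obtain ⟨R, hMR, hR⟩ := eq_prefixBeforeLastDecision_append M hdec
  set N := prefixBeforeLastDecision M
  set d := lastDecision M
  have helts : elements M = elements N ++ d :: elements R := by
    rw [hMR]; simp [elements]
  have hdecs : decisions M = decisions N ++ [d] := by
    rw [hMR, ← List.singleton_append, ← List.append_assoc, decisions_append, hR]
    simp [decisions]
  have hdM : d ∈ elements M := by simp [helts]
  have hdN : d ∉ elements N := by
    have := hM.nodup_elements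
    rw [helts, List.nodup_append] at this
    exact fun h => this.2.2 d h d List.mem_cons_self rfl
  have hdN' : d.opp ∉ elements N := fun h =>
    hM.consistent_elements ⟨d, hdM, by simp [helts, h]⟩
  refine (hM.of_prefix ⟨_, hMR.symm⟩).append hdN' (by simpa using hdN)
    fun v hv hdecN _ hdv => ?_
  obtain ⟨d', hd', hd'v⟩ :=
    (hM.decisionsEntail_of_prefix M List.prefix_rfl).exists_decision_opp_mem hff hv
  rw [hdecs, List.mem_append, List.mem_singleton] at hd'
  rcases hd' with hd' | rfl
  · exact hdecN d' (by simp [hd']) hd'v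
  · exact hv.1 ⟨_, by simpa using hdv, hd'v⟩

end TrailInvariant

lemma TrailInvariant.of_stepD {DecVars : Set Nat} {s t : DState} (hs : TrailInvariant s.2 s.1)
    (hst : stepD DecVars s t) : t.2 = s.2 ∧ TrailInvariant s.2 t.1 := by
  rcases hst with ⟨c, l, hc, hunit, hM, hF⟩ | ⟨hff, hdec, hM, hF⟩ | ⟨l, -, hl, hl', hM, hF⟩
  · exact ⟨hF, hM ▸ hs.unitPropagate hc hunit⟩
  · exact ⟨hF, hM ▸ hs.backtrack hff hdec⟩
  · exact ⟨hF, hM ▸ hs.decide hl hl'⟩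

lemma trailInvariant_of_reflTransGen {DecVars : Set Nat} {F₀ : Formula} {s : DState}
    (h : Relation.ReflTransGen (stepD DecVars) ([], F₀) s) :
    s.2 = F₀ ∧ TrailInvariant F₀ s.1 := by
  induction h with
  | refl => exact ⟨rfl, .nil F₀⟩
  | tail _ hst ih =>
    obtain ⟨hF, hinv⟩ := ih
    obtain ⟨hF', hinv'⟩ := TrailInvariant.of_stepD (by rwa [hF]) hst
    exact ⟨hF'.trans hF, hF ▸ hinv'⟩

lemma isModel_of_accepting {DecVars : Set Nat} {M : Trail} {F : Formula}
    (hcons : consistent (elements M)) (hvars : varsF F ⊆ DecVars)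
    (hacc : accepting DecVars (M, F)) : isModel (elements M) F := by
  refine ⟨hcons, fun c hc => ?_⟩
  obtain ⟨l, hlc, hl⟩ : ∃ l ∈ c, l.opp ∉ elements M := by
    by_contra! h
    exact hacc.1 ⟨c, hc, h⟩
  exact ⟨l, hlc, Classical.byContradiction fun hlM =>
    hacc.2 ⟨l, hvars ⟨c, hc, l, hlc, rfl⟩, hlM, hl⟩⟩

/-- soundness of the basic DPLL transition system. -/
theorem stmt7 (DecVars : Set Nat) (F0 : Formula) (M : Trail) (F : Formula)
    (h : Relation.ReflTransGen (stepD DecVars) ([], F0) (M, F)) :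
    (varsF F0 ⊆ DecVars → accepting DecVars (M, F) →
      sat F0 ∧ isModel (elements M) F0) ∧
    (rejecting (M, F) → ¬ sat F0) := by
  obtain ⟨rfl, hinv⟩ := trailInvariant_of_reflTransGen h
  refine ⟨fun hvars hacc => ?_, fun hrej => ?_⟩
  · have hmodel := isModel_of_accepting hinv.consistent_elements hvars hacc
    exact ⟨⟨_, hmodel⟩, hmodel⟩
  · exact (hinv.decisionsEntail_of_prefix M List.prefix_rfl).not_sat hrej.1 hrej.2

end SatFormal
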